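/- arXiv:1303.4212 — 2 statements merged into one kernel-verified Lean document; each statement's English description precedes it below -/
import Mathlib

section
/- Let f : X → 𝒢(Z,C) be a convex function and x₀, x ∈ dom f. Then the map t ↦ 0⁺(f(x + t(x₀ − x))) is constant on the open interval (0,1), and for all t ∈ (0,1) one has 0⁺(f(x + t(x₀ − x))) ⊇ 0⁺f(x) ∪ 0⁺f(x₀). -/
open Set Pointwise

noncomputable section

variable {Z : Type*} [AddCommGroup Z] [Module ℝ Z] [TopologicalSpace Z]

/-- The inf-residual `A ⊖ B = {z : B + {z} ⊆ A}`. -/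
def resid (A B : Set Z) : Set Z := {z : Z | B + {z} ⊆ A}

/-- The recession cone `0⁺A`, with the convention `0⁺∅ = ∅`. -/
def recCone (A : Set Z) : Set Z := {z : Z | A.Nonempty ∧ A + {z} ⊆ A}

/-- `A ⊕ B = cl (A + B)`. -/
def oplus (A B : Set Z) : Set Z := closure (A + B)

/-- Membership in `𝒢(Z,C)`: `A = cl co (A + C)`. -/
def IsG (C A : Set Z) : Prop := A = closure (convexHull ℝ (A + C))

/-- The set `C⁻ \ {0}` of nonzero elements of the negative dual cone. -/
def negDualNZ (C : Set Z) : Set (Z →L[ℝ] ℝ) :=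
  {p : Z →L[ℝ] ℝ | (∀ c ∈ C, p c ≤ 0) ∧ p ≠ 0}

/-- `inf {-z*(z) : z ∈ A}` as an extended real. -/
def scal (p : Z →L[ℝ] ℝ) (A : Set Z) : EReal :=
  sInf ((fun z => ((-(p z) : ℝ) : EReal)) '' A)

/-- Support function `σ(z*|A) = sup {z*(z) : z ∈ A}` as an extended real. -/
def suppF (p : Z →L[ℝ] ℝ) (A : Set Z) : EReal :=
  sSup ((fun z => ((p z : ℝ) : EReal)) '' A)

/-- Inf-residuation on the extended reals: `r ⊖ s = inf {t ∈ ℝ : r ≤ s + t}`. -/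
def eresid (r s : EReal) : EReal :=
  sInf ((fun t : ℝ => (t : EReal)) '' {t : ℝ | r ≤ s + (t : EReal)})

variable {X : Type*} [AddCommGroup X] [Module ℝ X]

/-- The scalarization `φ_{f,z*}(x) = inf {-z*(z) : z ∈ f(x)}`. -/
def phi (f : X → Set Z) (p : Z →L[ℝ] ℝ) (x : X) : EReal := scal p (f x)

/-- Convexity for set-valued functions:
`f(t x₁ + (1-t) x₂) ⊇ cl (t f(x₁) + (1-t) f(x₂))`. -/
def ConvexSV (f : X → Set Z) : Prop :=
  ∀ x₁ x₂ : X, ∀ t : ℝ, t ∈ Ioo (0:ℝ) 1 →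
    closure (t • f x₁ + (1 - t) • f x₂) ⊆ f (t • x₁ + (1 - t) • x₂)

/-- The set-valued directional derivative
`f′(x,u) = ⋂_{t₀>0} cl co ⋃_{0<t<t₀} (1/t)•(f(x+tu) ⊖ f(x))`. -/
def sder (f : X → Set Z) (x u : X) : Set Z :=
  ⋂ t₀ ∈ Ioi (0:ℝ), closure (convexHull ℝ
    (⋃ t ∈ Ioo (0:ℝ) t₀, (1 / t) • resid (f (x + t • u)) (f x)))

/-- The scalar Dini derivative `φ′_{f,z*}(x,u) = inf_{t>0} (1/t)(φ(x+tu) ⊖ φ(x))`. -/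
def phiDer (f : X → Set Z) (p : Z →L[ℝ] ℝ) (x u : X) : EReal :=
  ⨅ t ∈ Ioi (0:ℝ), (((1 / t : ℝ)) : EReal) * eresid (phi f p (x + t • u)) (phi f p x)

end


/-!
A direction `z` in the recession cone of `f v` yields, through the convexity inclusion
`l • f v + (1 - l) • f w ⊆ f (l • v + (1 - l) • w)`, points `c + (l * n) • z` of the closed convex
set `f (l • v + (1 - l) • w)` for all `n`; pulling such far-away points back to any point `d` of
that set along segments shows `d + z` lies in it. Every point of the open segment between `x` and
`x₀` is a proper convex combination of any other point of the closed segment with one of its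
endpoints, so all the recession cones along the open segment contain each other and the
endpoints' ones.
-/

open Filter Topology

section RecessionCone

variable {Z : Type*} [AddCommGroup Z]

theorem mem_recCone_iff {A : Set Z} {z : Z} :
    z ∈ recCone A ↔ A.Nonempty ∧ ∀ a ∈ A, a + z ∈ A := by
  simp only [recCone, add_singleton, image_subset_iff]
  rfl

variable [Module ℝ Z]

theorem add_natCast_smul_mem_of_mem_recCone {A : Set Z} {a z : Z} (hz : z ∈ recCone A)
    (ha : a ∈ A) (n : ℕ) : a + (n : ℝ) • z ∈ A := by
  induction n with
  | zero => simpa using ha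
  | succ n ih =>
    rw [Nat.cast_succ, add_smul, one_smul, ← add_assoc]
    exact (mem_recCone_iff.1 hz).2 _ ih

variable [TopologicalSpace Z]

theorem IsG.isClosed {C A : Set Z} (h : IsG C A) : IsClosed A := by
  rw [h]
  exact isClosed_closure

variable [IsTopologicalAddGroup Z] [ContinuousSMul ℝ Z]

theorem IsG.convex {C A : Set Z} (h : IsG C A) : Convex ℝ A := by
  rw [h]
  exact (convex_convexHull ℝ _).closure

theorem Convex.add_mem_of_tendsto_atTop {D : Set Z} (hDc : Convex ℝ D) (hD : IsClosed D)
    {ι : Type*} {l : Filter ι} [l.NeBot] {s : ι → ℝ} (hs : Tendsto s l atTop) {c d z : Z}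
    (hd : d ∈ D) (hc : ∀ i, c + s i • z ∈ D) : d + z ∈ D := by
  have hinv : Tendsto (fun i => (s i)⁻¹) l (𝓝 0) := tendsto_inv_atTop_zero.comp hs
  -- `(1 - r) • d + r • (c + r⁻¹ • z) ∈ D` tends to `d + z` as `r = (s i)⁻¹ → 0`.
  have hlim : Tendsto (fun i => (1 - (s i)⁻¹) • d + (s i)⁻¹ • c + z) l (𝓝 (d + z)) := by
    simpa using ((((tendsto_const_nhds (x := (1 : ℝ))).sub hinv).smul_const d).add
      (hinv.smul_const c)).add (tendsto_const_nhds (x := z))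
  refine hD.mem_of_tendsto hlim ?_
  filter_upwards [hs.eventually_ge_atTop 1] with i hi
  have hpos : 0 < s i := one_pos.trans_le hi
  have hmem := hDc hd (hc i) (sub_nonneg.2 (inv_le_one_of_one_le₀ hi)) (inv_nonneg.2 hpos.le)
    (sub_add_cancel 1 _)
  rwa [smul_add, smul_smul, inv_mul_cancel₀ hpos.ne', one_smul, ← add_assoc] at hmem

theorem recCone_subset_recCone_of_smul_add_smul_subset {A B D : Set Z} (hDc : Convex ℝ D)
    (hD : IsClosed D) (hB : B.Nonempty) {l : ℝ} (hl : l ∈ Ioo (0 : ℝ) 1)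
    (hsub : l • A + (1 - l) • B ⊆ D) : recCone A ⊆ recCone D := by
  intro z hz
  obtain ⟨a, ha⟩ := (mem_recCone_iff.1 hz).1
  obtain ⟨b, hb⟩ := hB
  have hray : ∀ n : ℕ, (l • a + (1 - l) • b) + (l * n) • z ∈ D := by
    intro n
    have hmem := hsub (add_mem_add
      (smul_mem_smul_set (add_natCast_smul_mem_of_mem_recCone hz ha n)) (smul_mem_smul_set hb))
    convert hmem using 1
    module
  have hs : Tendsto (fun n : ℕ => l * n) atTop atTop :=
    tendsto_natCast_atTop_atTop.const_mul_atTop hl.1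
  exact mem_recCone_iff.2 ⟨⟨_, by simpa using hray 0⟩,
    fun d hd => hDc.add_mem_of_tendsto_atTop hD hs hd hray⟩

end RecessionCone

section ConvexSV

variable {Z : Type*} [AddCommGroup Z] [Module ℝ Z] [TopologicalSpace Z]
  [IsTopologicalAddGroup Z] [ContinuousSMul ℝ Z] {X : Type*} [AddCommGroup X] [Module ℝ X]
  {f : X → Set Z}

theorem ConvexSV.recCone_subset_recCone (hf : ConvexSV f) (hconv : ∀ v, Convex ℝ (f v))
    (hclosed : ∀ v, IsClosed (f v)) {v w : X} (hw : (f w).Nonempty) {l : ℝ}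
    (hl : l ∈ Ioo (0 : ℝ) 1) : recCone (f v) ⊆ recCone (f (l • v + (1 - l) • w)) :=
  recCone_subset_recCone_of_smul_add_smul_subset (hconv _) (hclosed _) hw hl
    (subset_closure.trans (hf v w l hl))

theorem ConvexSV.recCone_subset_recCone_segment (hf : ConvexSV f) (hconv : ∀ v, Convex ℝ (f v))
    (hclosed : ∀ v, IsClosed (f v)) {x y : X} (hx : (f x).Nonempty) (hy : (f y).Nonempty)
    {s t : ℝ} (hs : s ∈ Icc (0 : ℝ) 1) (ht : t ∈ Ioo (0 : ℝ) 1) :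
    recCone (f (x + s • (y - x))) ⊆ recCone (f (x + t • (y - x))) := by
  rcases lt_trichotomy t s with hts | rfl | hst
  · have hs0 : 0 < s := ht.1.trans hts
    have hcomb : (t / s) • (x + s • (y - x)) + (1 - t / s) • x = x + t • (y - x) := by
      rw [smul_add, smul_smul, div_mul_cancel₀ t hs0.ne']
      module
    rw [← hcomb]
    exact hf.recCone_subset_recCone hconv hclosed hx
      ⟨div_pos ht.1 hs0, (div_lt_one hs0).2 hts⟩
  · exact subset_rfl
  · have hs1 : 0 < 1 - s := by linarith [ht.2]
    have hcomb : ((1 - t) / (1 - s)) • (x + s • (y - x)) + (1 - (1 - t) / (1 - s)) • y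
        = x + t • (y - x) := by
      have hcoef : (1 - t) / (1 - s) * s + (1 - (1 - t) / (1 - s)) = t := by field_simp; ring
      calc _ = x + ((1 - t) / (1 - s) * s + (1 - (1 - t) / (1 - s))) • (y - x) := by module
        _ = _ := by rw [hcoef]
    rw [← hcomb]
    exact hf.recCone_subset_recCone hconv hclosed hy
      ⟨div_pos (by linarith [ht.2]) hs1, (div_lt_one hs1).2 (by linarith)⟩

end ConvexSV

theorem stmt_4_general
  {Z : Type*} [AddCommGroup Z] [Module ℝ Z] [TopologicalSpace Z]
  [IsTopologicalAddGroup Z] [ContinuousSMul ℝ Z]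
  {X : Type*} [AddCommGroup X] [Module ℝ X]
  (C : Set Z)
  (f : X → Set Z) (hG : ∀ x, IsG C (f x)) (hf : ConvexSV f)
  (x₀ x : X) (hx₀ : (f x₀).Nonempty) (hx : (f x).Nonempty) :
    (∀ s ∈ Ioo (0:ℝ) 1, ∀ t ∈ Ioo (0:ℝ) 1,
        recCone (f (x + s • (x₀ - x))) = recCone (f (x + t • (x₀ - x))))
    ∧ (∀ t ∈ Ioo (0:ℝ) 1,
        recCone (f x) ∪ recCone (f x₀) ⊆ recCone (f (x + t • (x₀ - x)))) := by
  have hseg {s t : ℝ} (hs : s ∈ Icc (0 : ℝ) 1) (ht : t ∈ Ioo (0 : ℝ) 1) :=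
    hf.recCone_subset_recCone_segment (fun v => (hG v).convex) (fun v => (hG v).isClosed) hx hx₀
      hs ht
  refine ⟨fun s hs t ht => (hseg (Ioo_subset_Icc_self hs) ht).antisymm
    (hseg (Ioo_subset_Icc_self ht) hs), fun t ht => union_subset ?_ ?_⟩
  · simpa using hseg (left_mem_Icc.2 zero_le_one) ht
  · simpa using hseg (right_mem_Icc.2 zero_le_one) ht

theorem stmt_4
  {Z : Type*} [AddCommGroup Z] [Module ℝ Z] [TopologicalSpace Z]
  [IsTopologicalAddGroup Z] [ContinuousSMul ℝ Z] [LocallyConvexSpace ℝ Z] [T2Space Z]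
  {X : Type*} [AddCommGroup X] [Module ℝ X]
  (C : Set Z) (hCclosed : IsClosed C) (hCconv : Convex ℝ C)
  (hCcone : ∀ c ∈ C, ∀ r : ℝ, 0 < r → r • c ∈ C) (hC0 : (0:Z) ∈ C)
  (f : X → Set Z) (hG : ∀ x, IsG C (f x)) (hf : ConvexSV f)
  (x₀ x : X) (hx₀ : (f x₀).Nonempty) (hx : (f x).Nonempty) :
    (∀ s ∈ Ioo (0:ℝ) 1, ∀ t ∈ Ioo (0:ℝ) 1,
        recCone (f (x + s • (x₀ - x))) = recCone (f (x + t • (x₀ - x))))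
    ∧ (∀ t ∈ Ioo (0:ℝ) 1,
        recCone (f x) ∪ recCone (f x₀) ⊆ recCone (f (x + t • (x₀ - x)))) :=
  stmt_4_general C f hG hf x₀ x hx₀ hx
end

section
/- Let f : X → 𝒢(Z,C) be a convex function and x₀ ∈ dom f. If x₀ solves the scalarized Stampacchia inequality (svi_M): f(x₀) = Z, or for all x ∈ dom f with f(x) ≠ f(x₀) there exists z* ∈ C⁻∖{0} with 0 < φ′_{f,z*}(x₀, x−x₀), then x₀ solves the set-valued Stampacchia inequality (SVI_M): f(x₀) = Z, or for all x ∈ dom f with f(x) ≠ f(x₀) one has 0 ∉ f′(x₀, x−x₀). If additionally the weak regularity condition holds, namely f′(x₀, x−x₀) = ⋂_{z*∈C⁻∖{0}} {z ∈ Z : φ′_{f,z*}(x₀, x−x₀) ≤ −z*(z)} for all x ∈ X, then x₀ solves (SVI_M) if and only if it solves (svi_M). -/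
/-!
An element `v` of `f(x + tu) ⊖ f(x)` lowers the scalarization: `φ(x + tu) ≤ φ(x) - z*(v)`, so
`φ′(x,u) ≤ -z*(v/t)` for every difference quotient `v/t`. The set `{w | φ′(x,u) ≤ -z*(w)}` is a
closed convex half-space, so it contains `f′(x,u)`. Hence `0 ∈ f′(x,u)` forces `φ′(x,u) ≤ 0` for
every `z*`, which is (svi_M) ⇒ (SVI_M); under weak regularity, `0 ∉ f′(x,u)` says precisely that
`φ′(x,u) > 0` for some `z*`.
-/

open Set Pointwise

section Scalarization

variable {Z : Type*} [AddCommGroup Z] [Module ℝ Z] [TopologicalSpace Z]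

theorem scal_le_add_of_mem_resid (p : Z →L[ℝ] ℝ) {A B : Set Z} {v : Z} (hv : v ∈ resid A B) :
    scal p A ≤ scal p B + ((-(p v) : ℝ) : EReal) := by
  rw [← EReal.sub_le_iff_le_add (by simp) (by simp)]
  refine le_sInf ?_
  rintro _ ⟨b, hb, rfl⟩
  rw [EReal.sub_le_iff_le_add (by simp) (by simp), ← EReal.coe_add]
  have hbv : b + v ∈ A := hv (add_mem_add hb rfl)
  calc scal p A ≤ ((-(p (b + v)) : ℝ) : EReal) := sInf_le ⟨b + v, hbv, rfl⟩
    _ = ((-(p b) + -(p v) : ℝ) : EReal) := by rw [map_add, neg_add]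

theorem eresid_le_of_le_add {r s : EReal} {c : ℝ} (h : r ≤ s + c) : eresid r s ≤ c :=
  sInf_le ⟨c, h, rfl⟩

theorem convex_setOf_le_neg_apply (D : EReal) (p : Z →L[ℝ] ℝ) :
    Convex ℝ {z : Z | D ≤ ((-(p z) : ℝ) : EReal)} := by
  have hup : IsUpperSet {r : ℝ | D ≤ (r : EReal)} := fun _ _ hrs hr =>
    hr.trans (EReal.coe_le_coe_iff.2 hrs)
  exact hup.ordConnected.convex.linear_preimage (-p : Z →L[ℝ] ℝ).toLinearMap

theorem isClosed_setOf_le_neg_apply (D : EReal) (p : Z →L[ℝ] ℝ) :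
    IsClosed {z : Z | D ≤ ((-(p z) : ℝ) : EReal)} :=
  isClosed_le continuous_const (continuous_coe_real_ereal.comp p.continuous.neg)

variable {X : Type*} [AddCommGroup X] [Module ℝ X]

theorem phiDer_le_of_mem_resid (f : X → Set Z) (p : Z →L[ℝ] ℝ) {x u : X} {t : ℝ} (ht : 0 < t)
    {v : Z} (hv : v ∈ resid (f (x + t • u)) (f x)) :
    phiDer f p x u ≤ ((-(p ((1 / t) • v)) : ℝ) : EReal) :=
  calc phiDer f p x u
      ≤ ((1 / t : ℝ) : EReal) * eresid (phi f p (x + t • u)) (phi f p x) := iInf₂_le t ht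
    _ ≤ ((1 / t : ℝ) : EReal) * ((-(p v) : ℝ) : EReal) :=
        mul_le_mul_of_nonneg_left (eresid_le_of_le_add (scal_le_add_of_mem_resid p hv))
          (EReal.coe_nonneg.2 (by positivity))
    _ = ((-(p ((1 / t) • v)) : ℝ) : EReal) := by
        rw [← EReal.coe_mul, map_smul, smul_eq_mul, mul_neg]

theorem phiDer_le_of_mem_sder (f : X → Set Z) (p : Z →L[ℝ] ℝ) {x u : X} {z : Z}
    (hz : z ∈ sder f x u) : phiDer f p x u ≤ ((-(p z) : ℝ) : EReal) := by
  have hquot : (⋃ t ∈ Ioo (0:ℝ) 1, (1 / t) • resid (f (x + t • u)) (f x)) ⊆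
      {w : Z | phiDer f p x u ≤ ((-(p w) : ℝ) : EReal)} := by
    simp only [iUnion_subset_iff]
    rintro t ht _ ⟨v, hv, rfl⟩
    exact phiDer_le_of_mem_resid f p ht.1 hv
  exact closure_minimal (convexHull_min hquot (convex_setOf_le_neg_apply _ p))
    (isClosed_setOf_le_neg_apply _ p) (mem_iInter₂.1 hz 1 (mem_Ioi.2 one_pos))

theorem zero_notMem_sder_of_pos_phiDer (f : X → Set Z) {p : Z →L[ℝ] ℝ} {x u : X}
    (hp : 0 < phiDer f p x u) : (0 : Z) ∉ sder f x u := fun h0 =>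
  hp.not_ge (by simpa using phiDer_le_of_mem_sder f p h0)

theorem exists_pos_phiDer_of_zero_notMem_sder (C : Set Z) (f : X → Set Z) {x u : X}
    (hreg : sder f x u = ⋂ p ∈ negDualNZ C, {z : Z | phiDer f p x u ≤ ((-(p z) : ℝ) : EReal)})
    (h0 : (0 : Z) ∉ sder f x u) : ∃ p ∈ negDualNZ C, 0 < phiDer f p x u := by
  simpa [hreg] using h0

/-- `x₀` solves the set-valued Stampacchia inequality (SVI_M). -/
def SolvesSetSVI (f : X → Set Z) (x₀ : X) : Prop :=
  f x₀ = univ ∨ ∀ x : X, (f x).Nonempty → f x ≠ f x₀ → (0 : Z) ∉ sder f x₀ (x - x₀)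

/-- `x₀` solves the scalarized Stampacchia inequality (svi_M). -/
def SolvesScalarSVI (C : Set Z) (f : X → Set Z) (x₀ : X) : Prop :=
  f x₀ = univ ∨ ∀ x : X, (f x).Nonempty → f x ≠ f x₀ →
    ∃ p ∈ negDualNZ C, (0 : EReal) < phiDer f p x₀ (x - x₀)

theorem SolvesScalarSVI.solvesSetSVI {C : Set Z} {f : X → Set Z} {x₀ : X}
    (h : SolvesScalarSVI C f x₀) : SolvesSetSVI f x₀ :=
  h.imp_right fun h x hx hne =>
    let ⟨_, _, hp⟩ := h x hx hne
    zero_notMem_sder_of_pos_phiDer f hp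

theorem SolvesSetSVI.solvesScalarSVI {C : Set Z} {f : X → Set Z} {x₀ : X}
    (hreg : ∀ x : X, sder f x₀ (x - x₀)
      = ⋂ p ∈ negDualNZ C, {z : Z | phiDer f p x₀ (x - x₀) ≤ ((-(p z) : ℝ) : EReal)})
    (h : SolvesSetSVI f x₀) : SolvesScalarSVI C f x₀ :=
  h.imp_right fun h x hx hne => exists_pos_phiDer_of_zero_notMem_sder C f (hreg x) (h x hx hne)

end Scalarization

theorem stmt_14_general
  {Z : Type*} [AddCommGroup Z] [Module ℝ Z] [TopologicalSpace Z]
  {X : Type*} [AddCommGroup X] [Module ℝ X]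
  (C : Set Z) (f : X → Set Z) (x₀ : X) :
    ((f x₀ = univ ∨ ∀ x : X, (f x).Nonempty → f x ≠ f x₀ →
      ∃ p ∈ negDualNZ C, (0:EReal) < phiDer f p x₀ (x - x₀)) → (f x₀ = univ ∨ ∀ x : X, (f x).Nonempty → f x ≠ f x₀ →
      (0:Z) ∉ sder f x₀ (x - x₀)))
    ∧ ((∀ x : X, sder f x₀ (x - x₀)
      = ⋂ p ∈ negDualNZ C, {z : Z | phiDer f p x₀ (x - x₀) ≤ ((-(p z) : ℝ) : EReal)}) → ((f x₀ = univ ∨ ∀ x : X, (f x).Nonempty → f x ≠ f x₀ →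
      (0:Z) ∉ sder f x₀ (x - x₀)) ↔ (f x₀ = univ ∨ ∀ x : X, (f x).Nonempty → f x ≠ f x₀ →
      ∃ p ∈ negDualNZ C, (0:EReal) < phiDer f p x₀ (x - x₀)))) :=
  ⟨SolvesScalarSVI.solvesSetSVI,
    fun hreg => ⟨SolvesSetSVI.solvesScalarSVI hreg, SolvesScalarSVI.solvesSetSVI⟩⟩

theorem stmt_14
  {Z : Type*} [AddCommGroup Z] [Module ℝ Z] [TopologicalSpace Z]
  [IsTopologicalAddGroup Z] [ContinuousSMul ℝ Z] [LocallyConvexSpace ℝ Z] [T2Space Z]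
  {X : Type*} [AddCommGroup X] [Module ℝ X]
  (C : Set Z) (hCclosed : IsClosed C) (hCconv : Convex ℝ C)
  (hCcone : ∀ c ∈ C, ∀ r : ℝ, 0 < r → r • c ∈ C) (hC0 : (0:Z) ∈ C)
  (hdual : (negDualNZ C).Nonempty)
  (f : X → Set Z) (hG : ∀ x, IsG C (f x)) (hf : ConvexSV f)
  (x₀ : X) (hx₀ : (f x₀).Nonempty) :
    ((f x₀ = univ ∨ ∀ x : X, (f x).Nonempty → f x ≠ f x₀ →
      ∃ p ∈ negDualNZ C, (0:EReal) < phiDer f p x₀ (x - x₀)) → (f x₀ = univ ∨ ∀ x : X, (f x).Nonempty → f x ≠ f x₀ →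
      (0:Z) ∉ sder f x₀ (x - x₀)))
    ∧ ((∀ x : X, sder f x₀ (x - x₀)
      = ⋂ p ∈ negDualNZ C, {z : Z | phiDer f p x₀ (x - x₀) ≤ ((-(p z) : ℝ) : EReal)}) → ((f x₀ = univ ∨ ∀ x : X, (f x).Nonempty → f x ≠ f x₀ →
      (0:Z) ∉ sder f x₀ (x - x₀)) ↔ (f x₀ = univ ∨ ∀ x : X, (f x).Nonempty → f x ≠ f x₀ →
      ∃ p ∈ negDualNZ C, (0:EReal) < phiDer f p x₀ (x - x₀)))) :=
  stmt_14_general C f x₀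
end
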